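/- arXiv:1010.5206 — 2 statements merged into one kernel-verified Lean document; each statement's English description precedes it below -/
import Mathlib

section
/- For n ≥ k ≥ 1, the value g(n,1,k), defined as the maximum size of a 1-simplex-free family F of subsets of an n-element set X all of size at most n−k and with some member of size exactly n−k, equals 2^{n-1} − Σ_{j=1}^{k-1} C(n−1, j), and this maximum is attained by the family {A ⊆ X : x ∈ A, |A| ≤ n−k} ∪ {∅} for any fixed x ∈ X. -/
/-! The nonempty members of a 1-simplex-free family pairwise intersect. A member of size
`i < k` has `2 i < n`, so by Erdős–Ko–Rado each such level has at most `C(n-1, i-1)` members,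
as many as the level-`i` sets containing `x`. A member `A` with `k ≤ |A| ≤ n - k` is sent to
whichever of `A`, `X \ A` contains `x`; this is injective since `A` and `X \ A` never both
belong to an intersecting family, and it lands among the sets containing `x` of size between
`k` and `n - k`. So the family has at most `1 + #{A ∋ x : |A| ≤ n - k}` members, and the
extremal family attains this. Reflecting `j ↦ n - 1 - j` turns that count into the stated
binomial expression. -/

open Finset

/-- A `d`-simplex: `d+1` sets whose total intersection is empty but such that
the intersection of any `d` of them is nonempty. -/
def IsSimplex {α : Type*} [DecidableEq α] (d : ℕ) (A : Fin (d + 1) → Finset α) : Prop :=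
  (⋂ i, (A i : Set α)) = ∅ ∧
    ∀ j : Fin (d + 1), (⋂ i, ⋂ (_ : i ≠ j), (A i : Set α)).Nonempty

/-- A family is `d`-simplex-free if it contains no `d`-simplex. -/
def SimplexFree {α : Type*} [DecidableEq α] (d : ℕ) (F : Finset (Finset α)) : Prop :=
  ¬ ∃ A : Fin (d + 1) → Finset α, (∀ i, A i ∈ F) ∧ IsSimplex d A

theorem sum_range_choose_add_sum_range_choose {m s k : ℕ} (h : s + k = m + 1) :
    ∑ j ∈ range s, m.choose j + ∑ j ∈ range k, m.choose j = 2 ^ m := by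
  have hreflect : ∑ j ∈ range s, m.choose j = ∑ j ∈ Ico k (m + 1), m.choose j := by
    rw [← sum_range_reflect, sum_Ico_eq_sum_range, show m + 1 - k = s by omega]
    refine sum_congr rfl fun j hj => ?_
    rw [mem_range] at hj
    rw [← Nat.choose_symm (by omega)]
    congr 1
    omega
  rw [hreflect, add_comm, sum_range_add_sum_Ico _ (by omega), Nat.sum_range_choose]

theorem card_powerset_filter_card_lt {α : Type*} (Y : Finset α) (m : ℕ) :
    #{B ∈ Y.powerset | #B < m} = ∑ j ∈ range m, (#Y).choose j := by
  calc #{B ∈ Y.powerset | #B < m} = #{B ∈ Y.powerset | #B ∈ range m} := by simp only [mem_range]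
    _ = ∑ j ∈ range m, #(Y.powersetCard j) := by
      simp only [← sum_card_fiberwise_eq_card_filter, powersetCard_eq_filter]
    _ = ∑ j ∈ range m, (#Y).choose j := by simp only [card_powersetCard]

section

variable {α : Type*} [DecidableEq α]

theorem isSimplex_one_iff {A : Fin 2 → Finset α} :
    IsSimplex 1 A ↔ Disjoint (A 0) (A 1) ∧ (A 0).Nonempty ∧ (A 1).Nonempty := by
  simp [IsSimplex, Set.iInter_eq_empty_iff, Finset.disjoint_left, Finset.Nonempty,
    or_iff_not_imp_left, and_comm]

theorem simplexFree_one_iff {F : Finset (Finset α)} :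
    SimplexFree 1 F ↔ ((F.erase ∅ : Finset (Finset α)) : Set (Finset α)).Intersecting := by
  constructor
  · intro hF A hA B hB hAB
    rw [mem_coe, mem_erase, ← nonempty_iff_ne_empty] at hA hB
    exact hF ⟨![A, B], by simp [Fin.forall_fin_two, hA.2, hB.2],
      isSimplex_one_iff.2 ⟨hAB, hA.1, hB.1⟩⟩
  · rintro hF ⟨A, hAF, hA⟩
    obtain ⟨hdisj, h0, h1⟩ := isSimplex_one_iff.1 hA
    exact hF (mem_erase.2 ⟨h0.ne_empty, hAF 0⟩) (mem_erase.2 ⟨h1.ne_empty, hAF 1⟩) hdisj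

theorem erdos_ko_rado_fintype {β : Type*} [Fintype β] [DecidableEq β] {ℬ : Finset (Finset β)}
    {r : ℕ} (hℬ : (ℬ : Set (Finset β)).Intersecting) (hr : (ℬ : Set (Finset β)).Sized r)
    (hrβ : r ≤ Fintype.card β / 2) :
    #ℬ ≤ (Fintype.card β - 1).choose (r - 1) := by
  let e := (Fintype.equivFin β).finsetCongr.toEmbedding
  have hmap : ((ℬ.map e : Finset _) : Set (Finset (Fin _))) = e '' ℬ := coe_map e ℬ
  rw [← card_map e]
  refine erdos_ko_rado ?_ ?_ hrβ <;> rw [hmap]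
  · rintro _ ⟨A, hA, rfl⟩ _ ⟨B, hB, rfl⟩
    simpa [e, Equiv.finsetCongr_apply, disjoint_map] using hℬ hA hB
  · rintro _ ⟨A, hA, rfl⟩
    simpa [e] using hr hA

theorem erdos_ko_rado_of_subset {X : Finset α} {𝒜 : Finset (Finset α)} {r : ℕ}
    (h𝒜X : 𝒜 ⊆ X.powerset) (h𝒜 : (𝒜 : Set (Finset α)).Intersecting)
    (hr : (𝒜 : Set (Finset α)).Sized r) (hrX : r ≤ #X / 2) :
    #𝒜 ≤ (#X - 1).choose (r - 1) := by
  have hrestrict : ∀ A ∈ 𝒜, (A.subtype (· ∈ X)).map (Function.Embedding.subtype _) = A :=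
    fun A hA => subtype_map_of_mem (mem_powerset.1 (h𝒜X hA))
  have hinj : Set.InjOn (fun A : Finset α => A.subtype (· ∈ X)) 𝒜 := fun A hA B hB hAB => by
    rw [← hrestrict A hA, ← hrestrict B hB]
    exact congrArg _ hAB
  rw [← card_image_of_injOn hinj, ← Fintype.card_coe X]
  refine erdos_ko_rado_fintype ?_ ?_ (by simpa using hrX)
  · simp only [coe_image]
    rintro _ ⟨A, hA, rfl⟩ _ ⟨B, hB, rfl⟩ hAB
    refine h𝒜 hA hB ?_
    rw [← hrestrict A hA, ← hrestrict B hB, disjoint_map]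
    exact hAB
  · simp only [coe_image]
    rintro _ ⟨A, hA, rfl⟩
    rw [← hr hA, ← card_map, hrestrict A hA]

theorem card_filter_mem_eq_card_filter_erase {X : Finset α} {x : α} (hx : x ∈ X)
    (p : ℕ → Prop) [DecidablePred p] :
    #{A ∈ X.powerset | x ∈ A ∧ p #A} = #{B ∈ (X.erase x).powerset | p (#B + 1)} := by
  refine card_nbij' (·.erase x) (insert x) ?_ ?_ ?_ ?_
  · intro A hA
    simp only [coe_filter, mem_powerset, Set.mem_ofPred_eq] at hA ⊢
    exact ⟨erase_subset_erase x hA.1, by rw [card_erase_add_one hA.2.1]; exact hA.2.2⟩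
  · intro B hB
    simp only [coe_filter, mem_powerset, Set.mem_ofPred_eq] at hB ⊢
    have hxB : x ∉ B := fun h => (mem_erase.1 (hB.1 h)).1 rfl
    exact ⟨insert_subset hx (hB.1.trans (erase_subset x X)), mem_insert_self x B,
      by rw [card_insert_of_notMem hxB]; exact hB.2⟩
  · intro A hA
    exact insert_erase (mem_filter.1 hA).2.1
  · intro B hB
    exact erase_insert fun h => (mem_erase.1 (mem_powerset.1 (mem_filter.1 hB).1 h)).1 rfl

theorem card_filter_mem_card_eq {X : Finset α} {x : α} (hx : x ∈ X) {i : ℕ} (hi : 1 ≤ i) :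
    #{A ∈ X.powerset | x ∈ A ∧ #A = i} = (#X - 1).choose (i - 1) := by
  rw [card_filter_mem_eq_card_filter_erase hx (· = i), ← card_erase_of_mem hx,
    ← card_powersetCard, powersetCard_eq_filter]
  congr 1
  exact filter_congr fun B _ => by omega

theorem card_filter_mem_card_le {X : Finset α} {x : α} (hx : x ∈ X) (m : ℕ) :
    #{A ∈ X.powerset | x ∈ A ∧ #A ≤ m} = ∑ j ∈ range m, (#X - 1).choose j := by
  rw [card_filter_mem_eq_card_filter_erase hx (· ≤ m), ← card_erase_of_mem hx,
    ← card_powerset_filter_card_lt]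
  simp only [Nat.add_one_le_iff]

theorem card_filter_mem_card_le_add_one {X : Finset α} {x : α} (hx : x ∈ X) {k : ℕ}
    (hk : 1 ≤ k) (hkX : k ≤ #X) :
    #{A ∈ X.powerset | x ∈ A ∧ #A ≤ #X - k} + 1 =
      2 ^ (#X - 1) - ∑ j ∈ Icc 1 (k - 1), (#X - 1).choose j := by
  have htotal := sum_range_choose_add_sum_range_choose (m := #X - 1) (s := #X - k) (k := k)
    (by omega)
  have hhead : ∑ j ∈ range k, (#X - 1).choose j = 1 + ∑ j ∈ Icc 1 (k - 1), (#X - 1).choose j := by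
    rw [range_eq_Ico, sum_eq_sum_Ico_succ_bot hk, ← Ico_add_one_right_eq_Icc,
      Nat.sub_add_cancel hk, Nat.choose_zero_right]
  rw [card_filter_mem_card_le hx]
  omega

section Intersecting

variable {X : Finset α} {x : α} {𝒜 : Finset (Finset α)}

theorem card_filter_card_eq_le_of_intersecting (hx : x ∈ X) (h𝒜X : 𝒜 ⊆ X.powerset)
    (h𝒜 : (𝒜 : Set (Finset α)).Intersecting) {i : ℕ} (hi : i ≤ #X / 2) :
    #{A ∈ 𝒜 | #A = i} ≤ #{A ∈ X.powerset | x ∈ A ∧ #A = i} := by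
  rcases Nat.eq_zero_or_pos i with rfl | hi0
  · rw [filter_eq_empty_iff.2 fun A hA hA0 => h𝒜.ne_bot hA (card_eq_zero.1 hA0), card_empty]
    exact Nat.zero_le _
  · rw [card_filter_mem_card_eq hx hi0]
    exact erdos_ko_rado_of_subset ((filter_subset _ _).trans h𝒜X)
      (h𝒜.mono (coe_subset.2 (filter_subset _ _))) (fun A hA => (mem_filter.1 hA).2) hi

theorem card_filter_card_lt_le_of_intersecting (hx : x ∈ X) (h𝒜X : 𝒜 ⊆ X.powerset)
    (h𝒜 : (𝒜 : Set (Finset α)).Intersecting) {k : ℕ} (h𝒜k : ∀ A ∈ 𝒜, #A ≤ #X - k) :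
    #{A ∈ 𝒜 | #A < k} ≤ #{A ∈ {A ∈ X.powerset | x ∈ A ∧ #A ≤ #X - k} | #A < k} := by
  have hlevels (𝒞 : Finset (Finset α)) :
      #{A ∈ 𝒞 | #A < k} = ∑ i ∈ range k, #{A ∈ 𝒞 | #A = i} := by
    simp only [sum_card_fiberwise_eq_card_filter, mem_range]
  rw [hlevels, hlevels]
  refine sum_le_sum fun i hi => ?_
  rw [mem_range] at hi
  by_cases hik : i ≤ #X - k
  · calc #{A ∈ 𝒜 | #A = i} ≤ #{A ∈ X.powerset | x ∈ A ∧ #A = i} :=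
          card_filter_card_eq_le_of_intersecting hx h𝒜X h𝒜 (by omega)
      _ = _ := by
        rw [filter_filter]
        exact congrArg card (filter_congr fun A _ => by grind)
  · have hempty : {A ∈ 𝒜 | #A = i} = ∅ :=
      filter_eq_empty_iff.2 fun A hA hAi => hik (hAi ▸ h𝒜k A hA)
    rw [hempty, card_empty]
    exact Nat.zero_le _

theorem injOn_ite_mem_sdiff_of_intersecting (h𝒜X : 𝒜 ⊆ X.powerset)
    (h𝒜 : (𝒜 : Set (Finset α)).Intersecting) :
    Set.InjOn (fun A => if x ∈ A then A else X \ A) 𝒜 := by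
  intro A hA B hB hAB
  have hAX := mem_powerset.1 (h𝒜X hA)
  have hBX := mem_powerset.1 (h𝒜X hB)
  by_cases hxA : x ∈ A <;> by_cases hxB : x ∈ B <;> simp only [hxA, hxB, if_true, if_false] at hAB
  · exact hAB
  · exact absurd (hAB ▸ sdiff_disjoint) (h𝒜 hA hB)
  · exact absurd (hAB ▸ disjoint_sdiff) (h𝒜 hA hB)
  · rw [← Finset.sdiff_sdiff_eq_self hAX, hAB, Finset.sdiff_sdiff_eq_self hBX]

theorem card_filter_not_card_lt_le_of_intersecting (hx : x ∈ X) (h𝒜X : 𝒜 ⊆ X.powerset)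
    (h𝒜 : (𝒜 : Set (Finset α)).Intersecting) {k : ℕ} (h𝒜k : ∀ A ∈ 𝒜, #A ≤ #X - k) :
    #{A ∈ 𝒜 | ¬#A < k} ≤ #{A ∈ {A ∈ X.powerset | x ∈ A ∧ #A ≤ #X - k} | ¬#A < k} := by
  refine card_le_card_of_injOn _ ?_ ((injOn_ite_mem_sdiff_of_intersecting (x := x) h𝒜X h𝒜).mono
    (coe_subset.2 (filter_subset _ _)))
  intro A hA
  rw [mem_coe, mem_filter] at hA
  have hAX := mem_powerset.1 (h𝒜X hA.1)
  have hA𝒜 := h𝒜k A hA.1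
  rw [mem_coe, mem_filter, mem_filter, mem_powerset]
  by_cases hxA : x ∈ A
  · simp only [if_pos hxA]
    exact ⟨⟨hAX, hxA, hA𝒜⟩, hA.2⟩
  · simp only [if_neg hxA, card_sdiff_of_subset hAX]
    exact ⟨⟨sdiff_subset, mem_sdiff.2 ⟨hx, hxA⟩, by omega⟩, by omega⟩

theorem card_le_card_filter_mem_of_intersecting (hx : x ∈ X) (h𝒜X : 𝒜 ⊆ X.powerset)
    (h𝒜 : (𝒜 : Set (Finset α)).Intersecting) {k : ℕ} (h𝒜k : ∀ A ∈ 𝒜, #A ≤ #X - k) :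
    #𝒜 ≤ #{A ∈ X.powerset | x ∈ A ∧ #A ≤ #X - k} := by
  rw [← card_filter_add_card_filter_not (s := 𝒜) (fun A => #A < k),
    ← card_filter_add_card_filter_not (s := {A ∈ X.powerset | x ∈ A ∧ #A ≤ #X - k})
      (fun A => #A < k)]
  exact add_le_add (card_filter_card_lt_le_of_intersecting hx h𝒜X h𝒜 h𝒜k)
    (card_filter_not_card_lt_le_of_intersecting hx h𝒜X h𝒜 h𝒜k)

end Intersecting

theorem simplexFree_one_of_forall_ne_empty_mem {F : Finset (Finset α)} {x : α}
    (h : ∀ A ∈ F, A ≠ ∅ → x ∈ A) : SimplexFree 1 F :=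
  simplexFree_one_iff.2 fun A hA B hB =>
    not_disjoint_iff.2 ⟨x, h A (mem_of_mem_erase hA) (ne_of_mem_erase hA),
      h B (mem_of_mem_erase hB) (ne_of_mem_erase hB)⟩

theorem card_le_card_filter_mem_add_one_of_simplexFree {X : Finset α} {x : α} (hx : x ∈ X)
    {F : Finset (Finset α)} (hFX : F ⊆ X.powerset) {k : ℕ} (hFk : ∀ A ∈ F, #A ≤ #X - k)
    (hF : SimplexFree 1 F) : #F ≤ #{A ∈ X.powerset | x ∈ A ∧ #A ≤ #X - k} + 1 := by
  have hF' := card_le_card_filter_mem_of_intersecting hx ((erase_subset _ _).trans hFX)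
    (simplexFree_one_iff.1 hF) fun A hA => hFk A (mem_of_mem_erase hA)
  have := pred_card_le_card_erase (s := F) (a := ∅)
  omega

end

theorem stmt2 {α : Type*} [DecidableEq α] (n k : ℕ) (hk : 1 ≤ k) (hkn : k ≤ n)
    (X : Finset α) (hX : X.card = n) (x : α) (hx : x ∈ X) :
    (∀ F : Finset (Finset α), F ⊆ X.powerset → (∀ A ∈ F, A.card ≤ n - k) →
      (∃ A ∈ F, A.card = n - k) → SimplexFree 1 F →
      F.card ≤ 2 ^ (n - 1) - ∑ j ∈ Finset.Icc 1 (k - 1), (n - 1).choose j) ∧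
    (let G := X.powerset.filter (fun A => x ∈ A ∧ A.card ≤ n - k) ∪ {∅};
      G ⊆ X.powerset ∧ (∀ A ∈ G, A.card ≤ n - k) ∧ (∃ A ∈ G, A.card = n - k) ∧
      SimplexFree 1 G ∧
      G.card = 2 ^ (n - 1) - ∑ j ∈ Finset.Icc 1 (k - 1), (n - 1).choose j) := by
  subst hX
  have hcard := card_filter_mem_card_le_add_one hx hk hkn
  refine ⟨fun F hFX hFk _ hF =>
    (card_le_card_filter_mem_add_one_of_simplexFree hx hFX hFk hF).trans hcard.le,
    ?_, ?_, ?_, ?_, ?_⟩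
  · exact union_subset (filter_subset _ _) (singleton_subset_iff.2 (empty_mem_powerset X))
  · intro A hA
    rcases mem_union.1 hA with hA | hA
    · exact (mem_filter.1 hA).2.2
    · simp [mem_singleton.1 hA]
  · rcases Nat.eq_zero_or_pos (#X - k) with hk0 | hk0
    · exact ⟨∅, mem_union_right _ (mem_singleton_self ∅), hk0 ▸ card_empty⟩
    · obtain ⟨A, hxA, hAX, hA⟩ := exists_subsuperset_card_eq (n := #X - k)
        (singleton_subset_iff.2 hx) (by rwa [card_singleton]) (Nat.sub_le _ _)
      exact ⟨A, mem_union_left _ (by simp [hAX, hA, singleton_subset_iff.1 hxA]), hA⟩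
  · exact simplexFree_one_of_forall_ne_empty_mem fun A hA hA0 =>
      (mem_filter.1 ((mem_union.1 hA).resolve_right (notMem_singleton.2 hA0))).2.1
  · have hempty : ∅ ∉ {A ∈ X.powerset | x ∈ A ∧ #A ≤ #X - k} := by simp
    rw [card_union_of_disjoint (disjoint_singleton_right.2 hempty), card_singleton, hcard]
end

section
/- For all n ≥ 1, if F is a triangle-free (2-simplex-free) family of subsets of an n-element set X, then |F| ≤ 2^{n-1} + n. Moreover, equality holds if and only if F = {A ⊆ X : x ∈ A} ∪ {A ⊆ X : |A| ≤ 1, x ∉ A} for some x ∈ X. -/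
open Finset

/-!
Members with at most one element lie in no triangle and there are at most `n + 1` of them, so
it suffices to show that a triangle-free family `G` of sets of size `≥ 2` on `X` satisfies
`2|G| + 2 ≤ 2^|X|`, with equality only for a star `{A ⊆ X : x ∈ A, 2 ≤ |A|}`.

Fix `x ∈ X`, put `Y = X \ {x}`, let `G₀` be the members avoiding `x` and `H` the link
`{A \ {x} : x ∈ A ∈ G}`. If `W` and `Y \ W` both lie in `H`, a member of `G₀` meeting both would
form a triangle with `W ∪ {x}` and `(Y \ W) ∪ {x}`; so `W` splits no member of `G₀`. Counting
complementary pairs gives `2|H| + 2 ≤ 2^|Y| + c(G₀)`, where `c(G₀)` is the number of subsets of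
`Y` splitting no member of `G₀`, so the claim follows from the stronger bound
`2|G| + c(G) ≤ 2^|Y|` for all such families `G` on a ground set `Y`. That bound is proved by strong
induction on `Y`: let `V` be the least nonsplitting set containing some member of `G`; the members
outside `V` form a family on `Y \ V` with half the value of `c`, those inside `V` are bounded by
the first inequality, and `(2^|V| - 2)(2^|Y \ V| - 1) ≥ 0`. Following the equality case through both inequalities forces
`V = Y` and makes `G₀` empty or a star, after which a short analysis of `H` finds the centre.
-/

section

variable {α : Type*} [DecidableEq α]

lemma SimplexFree.mono {F F' : Finset (Finset α)} (h : SimplexFree 2 F) (hF : F' ⊆ F) :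
    SimplexFree 2 F' :=
  fun ⟨A, hA, hS⟩ => h ⟨A, fun i => hF (hA i), hS⟩

lemma SimplexFree.inter_nonempty {F : Finset (Finset α)} (h : SimplexFree 2 F) {A B C : Finset α}
    (hA : A ∈ F) (hB : B ∈ F) (hC : C ∈ F) (hAB : (A ∩ B).Nonempty) (hAC : (A ∩ C).Nonempty)
    (hBC : (B ∩ C).Nonempty) : (A ∩ B ∩ C).Nonempty := by
  by_contra hABC
  refine h ⟨![A, B, C], fun i => by fin_cases i <;> assumption, ?_, fun j => ?_⟩
  · refine Set.eq_empty_iff_forall_notMem.mpr fun a ha => hABC ⟨a, ?_⟩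
    simp only [Set.mem_iInter] at ha
    simpa [and_assoc] using And.intro (And.intro (ha 0) (ha 1)) (ha 2)
  · fin_cases j <;> [obtain ⟨a, ha⟩ := hBC; obtain ⟨a, ha⟩ := hAC; obtain ⟨a, ha⟩ := hAB] <;>
      exact ⟨a, Set.mem_iInter₂.mpr fun i hi => by fin_cases i <;> simp_all⟩

structure TriangleFreeOn (Y : Finset α) (G : Finset (Finset α)) : Prop where
  subset_powerset : G ⊆ Y.powerset
  two_le_card : ∀ A ∈ G, 2 ≤ #A
  simplexFree : SimplexFree 2 G

lemma TriangleFreeOn.mono {Y Y' : Finset α} {G G' : Finset (Finset α)} (h : TriangleFreeOn Y G)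
    (hG : G' ⊆ G) (hY : G' ⊆ Y'.powerset) : TriangleFreeOn Y' G' :=
  ⟨hY, fun A hA => h.two_le_card A (hG hA), h.simplexFree.mono hG⟩

lemma two_pow_card_eq_two_mul_two_pow_card_erase {X : Finset α} {x : α} (hx : x ∈ X) :
    2 ^ #X = 2 * 2 ^ #(X.erase x) := by
  rw [card_erase_of_mem hx, ← pow_succ', Nat.sub_add_cancel (card_pos.mpr ⟨x, hx⟩)]

def bigStar (X : Finset α) (x : α) : Finset (Finset α) :=
  X.powerset.filter fun A => x ∈ A ∧ 2 ≤ #A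

lemma mem_bigStar {X A : Finset α} {x : α} : A ∈ bigStar X x ↔ A ⊆ X ∧ x ∈ A ∧ 2 ≤ #A := by
  simp [bigStar]

lemma card_bigStar {X : Finset α} {x : α} (hx : x ∈ X) : 2 * #(bigStar X x) + 2 = 2 ^ #X := by
  have hmem : (bigStar X x).memberSubfamily x = (X.erase x).powerset.erase ∅ := by
    ext W
    by_cases hxW : x ∈ W
    · simp [mem_memberSubfamily, hxW, subset_erase]
    · simp [mem_memberSubfamily, mem_bigStar, hxW, insert_subset_iff, hx, subset_erase,
        card_insert_of_notMem, Finset.one_le_card, nonempty_iff_ne_empty, and_comm]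
  have hnon : (bigStar X x).nonMemberSubfamily x = ∅ :=
    eq_empty_of_forall_notMem fun A hA => by
      obtain ⟨hA, hxA⟩ := mem_nonMemberSubfamily.mp hA
      exact hxA (mem_bigStar.mp hA).2.1
  have hcard := card_memberSubfamily_add_card_nonMemberSubfamily x (bigStar X x)
  rw [hmem, hnon, card_erase_of_mem (empty_mem_powerset _), card_powerset, card_empty] at hcard
  have := two_pow_card_eq_two_mul_two_pow_card_erase hx
  have : 1 ≤ 2 ^ #(X.erase x) := Nat.one_le_two_pow
  omega

def nonsplitting (Y : Finset α) (G : Finset (Finset α)) : Finset (Finset α) :=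
  Y.powerset.filter fun W => ∀ A ∈ G, A ⊆ W ∨ Disjoint A W

section nonsplitting

variable {Y V W : Finset α} {G : Finset (Finset α)}

lemma mem_nonsplitting : W ∈ nonsplitting Y G ↔ W ⊆ Y ∧ ∀ A ∈ G, A ⊆ W ∨ Disjoint A W := by
  simp [nonsplitting]

lemma empty_mem_nonsplitting : ∅ ∈ nonsplitting Y G :=
  mem_nonsplitting.mpr ⟨empty_subset Y, fun _ _ => Or.inr (disjoint_empty_right _)⟩

lemma self_mem_nonsplitting (hG : G ⊆ Y.powerset) : Y ∈ nonsplitting Y G :=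
  mem_nonsplitting.mpr ⟨subset_rfl, fun _ hA => Or.inl (mem_powerset.mp (hG hA))⟩

lemma nonsplitting_empty : nonsplitting Y ∅ = Y.powerset := by
  simp [nonsplitting]

lemma card_nonsplitting_le : #(nonsplitting Y G) ≤ 2 ^ #Y :=
  (card_le_card (filter_subset _ _)).trans_eq (card_powerset Y)

lemma sdiff_mem_nonsplitting (hG : G ⊆ Y.powerset) (hW : W ∈ nonsplitting Y G) :
    Y \ W ∈ nonsplitting Y G := by
  refine mem_nonsplitting.mpr ⟨sdiff_subset, fun A hA => ?_⟩
  rcases (mem_nonsplitting.mp hW).2 A hA with h | h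
  · exact Or.inr (disjoint_of_subset_left h disjoint_sdiff)
  · exact Or.inl (subset_sdiff.mpr ⟨mem_powerset.mp (hG hA), h⟩)

lemma inter_mem_nonsplitting (hV : V ∈ nonsplitting Y G) (hW : W ∈ nonsplitting Y G) :
    V ∩ W ∈ nonsplitting Y G := by
  rw [mem_nonsplitting] at hV hW ⊢
  refine ⟨inter_subset_left.trans hV.1, fun A hA => ?_⟩
  rcases hV.2 A hA with hAV | hAV
  · rcases hW.2 A hA with hAW | hAW
    · exact Or.inl (subset_inter hAV hAW)
    · exact Or.inr (hAW.mono_right inter_subset_right)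
  · exact Or.inr (hAV.mono_right inter_subset_left)

lemma exists_atom_nonsplitting (hG : G ⊆ Y.powerset) {A₀ : Finset α} (hA₀ : A₀ ∈ G) :
    ∃ V ∈ nonsplitting Y G, A₀ ⊆ V ∧ ∀ W ∈ nonsplitting Y G, V ⊆ W ∨ Disjoint V W := by
  set R := (nonsplitting Y G).filter (A₀ ⊆ ·)
  have hYR : Y ∈ R := mem_filter.mpr ⟨self_mem_nonsplitting hG, mem_powerset.mp (hG hA₀)⟩
  have hR : ∀ W ∈ R, W ∈ nonsplitting Y G ∧ A₀ ⊆ W := fun W hW => mem_filter.mp hW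
  have hVR : R.inf' ⟨Y, hYR⟩ id ∈ R :=
    inf'_mem (R : Set (Finset α)) (fun U hU W hW => mem_filter.mpr
      ⟨inter_mem_nonsplitting (hR U hU).1 (hR W hW).1, subset_inter (hR U hU).2 (hR W hW).2⟩)
      _ _ _ fun W hW => hW
  refine ⟨_, (hR _ hVR).1, (hR _ hVR).2, fun W hW => ?_⟩
  rcases (mem_nonsplitting.mp hW).2 A₀ hA₀ with h | h
  · exact Or.inl (inf'_le id (mem_filter.mpr ⟨hW, h⟩))
  · refine Or.inr (disjoint_of_subset_left (inf'_le id (mem_filter.mpr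
      ⟨sdiff_mem_nonsplitting hG hW, ?_⟩)) disjoint_sdiff_self_left)
    exact subset_sdiff.mpr ⟨mem_powerset.mp (hG hA₀), h⟩

lemma filter_disjoint_nonsplitting :
    (nonsplitting Y G).filter (Disjoint V) =
      nonsplitting (Y \ V) (G.filter fun A => ¬A ⊆ V) := by
  ext W
  simp only [mem_filter, mem_nonsplitting, subset_sdiff]
  constructor
  · rintro ⟨⟨hWY, hW⟩, hVW⟩
    exact ⟨⟨hWY, hVW.symm⟩, fun A hA => hW A hA.1⟩
  · rintro ⟨⟨hWY, hWV⟩, hW⟩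
    refine ⟨⟨hWY, fun A hA => ?_⟩, hWV.symm⟩
    by_cases hAV : A ⊆ V
    · exact Or.inr (disjoint_of_subset_left hAV hWV.symm)
    · exact hW A ⟨hA, hAV⟩

lemma card_nonsplitting_eq_two_mul (hG : G ⊆ Y.powerset) (hVY : V ⊆ Y) (hV : V.Nonempty)
    (hatom : ∀ W ∈ nonsplitting Y G, V ⊆ W ∨ Disjoint V W) :
    #(nonsplitting Y G) = 2 * #(nonsplitting (Y \ V) (G.filter fun A => ¬A ⊆ V)) := by
  have hnot : (nonsplitting Y G).filter (fun W => ¬V ⊆ W) =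
      (nonsplitting Y G).filter (Disjoint V) :=
    filter_congr fun W hW => ⟨(hatom W hW).resolve_left, fun hVW hsub =>
      hV.ne_empty (disjoint_self.mp (hVW.mono_right hsub))⟩
  have hcompl :
      #((nonsplitting Y G).filter (V ⊆ ·)) = #((nonsplitting Y G).filter (Disjoint V)) := by
    have hWY : ∀ W ∈ nonsplitting Y G, W ⊆ Y := fun W hW => (mem_nonsplitting.mp hW).1
    refine card_nbij' (Y \ ·) (Y \ ·) (fun W hW => ?_) (fun W hW => ?_)
      (fun W hW => Finset.sdiff_sdiff_eq_self (hWY W (mem_filter.mp hW).1))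
      (fun W hW => Finset.sdiff_sdiff_eq_self (hWY W (mem_filter.mp hW).1))
    · obtain ⟨hW, hVW⟩ := mem_filter.mp hW
      exact mem_filter.mpr
        ⟨sdiff_mem_nonsplitting hG hW, disjoint_of_subset_left hVW disjoint_sdiff⟩
    · obtain ⟨hW, hVW⟩ := mem_filter.mp hW
      exact mem_filter.mpr ⟨sdiff_mem_nonsplitting hG hW, subset_sdiff.mpr ⟨hVY, hVW⟩⟩
  rw [← filter_disjoint_nonsplitting, ← card_filter_add_card_filter_not (V ⊆ ·), hnot, hcompl,
    two_mul]

end nonsplitting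

/-- For `H` the link of a point `x` lying in no member of `G`, this says that `G` together with
`{insert x B | B ∈ H}` has no triangle with two sides through `x`. -/
def MeetsInter (G H : Finset (Finset α)) : Prop :=
  ∀ A ∈ G, ∀ B ∈ H, ∀ C ∈ H, (A ∩ B).Nonempty → (A ∩ C).Nonempty → (A ∩ B ∩ C).Nonempty

section link

variable {Y W : Finset α} {G H : Finset (Finset α)}

lemma mem_nonsplitting_of_meetsInter (hG : G ⊆ Y.powerset) (hGH : MeetsInter G H)
    (hWY : W ⊆ Y) (hW : W ∈ H) (hW' : Y \ W ∈ H) : W ∈ nonsplitting Y G := by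
  refine mem_nonsplitting.mpr ⟨hWY, fun A hA => or_iff_not_imp_right.mpr fun hAW => ?_⟩
  intro a haA
  by_contra haW
  obtain ⟨b, hb⟩ := hGH A hA W hW (Y \ W) hW' (not_disjoint_iff_nonempty_inter.mp hAW)
    ⟨a, mem_inter.mpr ⟨haA, mem_sdiff.mpr ⟨mem_powerset.mp (hG hA) haA, haW⟩⟩⟩
  simp only [mem_inter, mem_sdiff] at hb
  exact hb.2.2 hb.1.2

lemma card_image_sdiff (hHY : H ⊆ Y.powerset) : #(H.image (Y \ ·)) = #H :=
  card_image_of_injOn fun W₁ h₁ W₂ h₂ h => by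
    rw [← Finset.sdiff_sdiff_eq_self (mem_powerset.mp (hHY h₁)),
      ← Finset.sdiff_sdiff_eq_self (mem_powerset.mp (hHY h₂))]
    exact congrArg (Y \ ·) h

lemma union_image_sdiff_subset_powerset (hHY : H ⊆ Y.powerset) :
    H ∪ H.image (Y \ ·) ⊆ Y.powerset :=
  union_subset hHY (image_subset_iff.mpr fun _ _ => mem_powerset.mpr sdiff_subset)

lemma card_union_image_sdiff_le (hHY : H ⊆ Y.powerset) : #(H ∪ H.image (Y \ ·)) ≤ 2 ^ #Y :=
  (card_le_card (union_image_sdiff_subset_powerset hHY)).trans_eq (card_powerset Y)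

lemma forall_mem_or_sdiff_mem (hHY : H ⊆ Y.powerset) (h : 2 ^ #Y ≤ #(H ∪ H.image (Y \ ·))) :
    ∀ W ⊆ Y, W ∈ H ∨ Y \ W ∈ H := by
  have heq := eq_of_subset_of_card_le (union_image_sdiff_subset_powerset hHY)
    (by rwa [card_powerset])
  intro W hW
  rcases mem_union.mp (heq ▸ mem_powerset.mpr hW) with h | h
  · exact Or.inl h
  · obtain ⟨B, hB, rfl⟩ := mem_image.mp h
    exact Or.inr (by rwa [Finset.sdiff_sdiff_eq_self (mem_powerset.mp (hHY hB))])

lemma two_mul_card_add_two_le_of_meetsInter (hY : Y.Nonempty) (hG : G ⊆ Y.powerset)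
    (hHY : H ⊆ Y.powerset) (hH : ∅ ∉ H) (hGH : MeetsInter G H) :
    2 * #H + 2 ≤ #(H ∪ H.image (Y \ ·)) + #(nonsplitting Y G) := by
  have hpairs : H ∩ H.image (Y \ ·) ⊆ ((nonsplitting Y G).erase ∅).erase Y := by
    intro W hW
    obtain ⟨hWH, B, hBH, rfl⟩ := (mem_inter.mp hW).imp_right mem_image.mp
    have hBY := mem_powerset.mp (hHY hBH)
    refine mem_erase.mpr ⟨fun h => hH ?_, mem_erase.mpr ⟨fun h => hH (h ▸ hWH), ?_⟩⟩
    · have hB := Finset.sdiff_sdiff_eq_self hBY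
      rw [h, sdiff_self, bot_eq_empty, eq_comm] at hB
      exact hB ▸ hBH
    · refine mem_nonsplitting_of_meetsInter hG hGH sdiff_subset hWH ?_
      rwa [Finset.sdiff_sdiff_eq_self hBY]
  have := card_le_card hpairs
  have := card_erase_add_one (mem_erase.mpr ⟨hY.ne_empty, self_mem_nonsplitting hG⟩)
  have := card_erase_add_one (empty_mem_nonsplitting (Y := Y) (G := G))
  have := card_union_add_card_inter H (H.image (Y \ ·))
  rw [card_image_sdiff hHY] at this
  omega

end link

section star

variable {Y : Finset α} {H : Finset (Finset α)} {z : α}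

lemma forall_mem_of_singleton_mem (hz : z ∈ Y) (hY : 2 ≤ #Y) (hHY : H ⊆ Y.powerset) (hH : ∅ ∉ H)
    (hGH : MeetsInter (bigStar Y z) H) {u : α} (hu : {u} ∈ H) : ∀ B ∈ H, u ∈ B := by
  intro B hB
  have hBY := mem_powerset.mp (hHY hB)
  obtain ⟨a, ha⟩ := hGH Y (mem_bigStar.mpr ⟨subset_rfl, hz, hY⟩) {u} hu B hB
    ⟨u, mem_inter.mpr ⟨mem_powerset.mp (hHY hu) (mem_singleton_self u), mem_singleton_self u⟩⟩
    (by rw [inter_eq_right.mpr hBY]; exact nonempty_iff_ne_empty.mpr fun h => hH (h ▸ hB))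
  simp only [mem_inter, mem_singleton] at ha
  exact ha.1.2 ▸ ha.2

-- If `Y.erase z ∈ H`, every member of `H` through `z` is `Y`, so for distinct `b, w ≠ z` both
-- `Y \ {z, b}` and `Y \ {z, w}` lie in `H`; they meet `{z, b, w}` in the disjoint `{w}` and `{b}`.
lemma erase_notMem_of_meetsInter_bigStar (hz : z ∈ Y) (hY : 3 ≤ #Y)
    (hGH : MeetsInter (bigStar Y z) H) (htight : ∀ W ⊆ Y, W ∈ H ∨ Y \ W ∈ H) :
    Y.erase z ∉ H := by
  intro hzH
  obtain ⟨b, hb, w, hw, hbw⟩ := one_lt_card.mp (show 1 < #(Y.erase z) by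
    rw [card_erase_of_mem hz]; omega)
  have hbz := ne_of_mem_erase hb
  have hwz := ne_of_mem_erase hw
  have hpair : ∀ c ∈ Y.erase z, {z, c} ∈ bigStar Y z := fun c hc => mem_bigStar.mpr
    ⟨insert_subset hz (singleton_subset_iff.mpr (mem_of_mem_erase hc)), mem_insert_self z _,
      (card_pair (ne_of_mem_erase hc).symm).ge⟩
  have hfull : ∀ c ∈ Y.erase z, ∀ D ∈ H, z ∈ D → c ∈ D := by
    intro c hc D hD hzD
    obtain ⟨a, ha⟩ := hGH _ (hpair c hc) _ hzH D hD ⟨c, by simp [hc]⟩ ⟨z, by simp [hzD]⟩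
    simp only [mem_inter, mem_insert, mem_singleton, mem_erase] at ha
    grind
  have hcompl : ∀ c ∈ Y.erase z, ∀ d ∈ Y.erase z, d ≠ c → Y \ {z, c} ∈ H := by
    intro c hc d hd hdc
    refine (htight _ (mem_bigStar.mp (hpair c hc)).1).resolve_left fun h => ?_
    have := hfull d hd _ h (mem_insert_self z _)
    simp only [mem_insert, mem_singleton] at this
    exact this.elim (ne_of_mem_erase hd) hdc
  have hzbw : {z, b, w} ∈ bigStar Y z := mem_bigStar.mpr
    ⟨by simp [insert_subset_iff, hz, mem_of_mem_erase hb, mem_of_mem_erase hw],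
      mem_insert_self z _, one_lt_card.mpr ⟨z, by simp, b, by simp, hbz.symm⟩⟩
  obtain ⟨a, ha⟩ := hGH _ hzbw _ (hcompl b hb w hw hbw.symm) _ (hcompl w hw b hb hbw)
    ⟨w, by simp [mem_of_mem_erase hw, hwz, hbw.symm]⟩ ⟨b, by simp [mem_of_mem_erase hb, hbz, hbw]⟩
  simp only [mem_inter, mem_insert, mem_singleton, mem_sdiff] at ha
  grind

lemma exists_forall_mem_of_meetsInter_bigStar (hz : z ∈ Y) (hY : 2 ≤ #Y) (hHY : H ⊆ Y.powerset)
    (hH : ∅ ∉ H) (hGH : MeetsInter (bigStar Y z) H) (htight : ∀ W ⊆ Y, W ∈ H ∨ Y \ W ∈ H) :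
    ∃ u ∈ Y, (∀ B ∈ H, u ∈ B) ∧ ∀ A ∈ bigStar Y z, u ∈ A := by
  rcases htight {z} (singleton_subset_iff.mpr hz) with hzH | hzH
  · exact ⟨z, hz, forall_mem_of_singleton_mem hz hY hHY hH hGH hzH,
      fun A hA => (mem_bigStar.mp hA).2.1⟩
  rw [sdiff_singleton_eq_erase] at hzH
  have hY2 : #Y = 2 := by
    by_contra h
    exact erase_notMem_of_meetsInter_bigStar hz (by omega) hGH htight hzH
  obtain ⟨b, hb⟩ := card_eq_one.mp (show #(Y.erase z) = 1 by rw [card_erase_of_mem hz]; omega)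
  have hbY : b ∈ Y := mem_of_mem_erase (hb ▸ mem_singleton_self b)
  refine ⟨b, hbY, forall_mem_of_singleton_mem hz hY hHY hH hGH (hb ▸ hzH), fun A hA => ?_⟩
  obtain ⟨hAY, -, hA2⟩ := mem_bigStar.mp hA
  exact eq_of_subset_of_card_le hAY (by omega) ▸ hbY

end star

lemma two_mul_add_two_mul_le_two_pow_add {g₁ g₂ s v r : ℕ} (hv : 2 ≤ v)
    (h₁ : 2 * g₁ + 2 ≤ 2 ^ v) (h₂ : 2 * g₂ + s ≤ 2 ^ r) (hs : s ≤ 2 ^ r) :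
    2 * (g₁ + g₂) + 2 * s ≤ 2 ^ (v + r) ∧
      (2 * (g₁ + g₂) + 2 * s = 2 ^ (v + r) → r = 0 ∧ 2 * g₁ + 2 = 2 ^ v) := by
  have hu : 4 ≤ 2 ^ v := by simpa using Nat.pow_le_pow_right two_pos hv
  -- the slack is `(2 ^ v - 2) * (2 ^ r - 1)`
  obtain ⟨a, ha⟩ : ∃ a, 2 ^ v = a + 4 := ⟨2 ^ v - 4, by omega⟩
  obtain ⟨b, hb⟩ : ∃ b, 2 ^ r = b + 1 := ⟨2 ^ r - 1, by have := @Nat.one_le_two_pow r; omega⟩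
  rw [pow_add, ha, hb]
  rw [ha] at h₁
  rw [hb] at h₂ hs
  refine ⟨by nlinarith, fun h => ⟨?_, by nlinarith⟩⟩
  obtain rfl : b = 0 := by nlinarith
  by_contra hr
  have := Nat.one_lt_two_pow hr
  omega

namespace TriangleFreeOn

variable {X Y : Finset α} {G : Finset (Finset α)} {x : α}

lemma nonMemberSubfamily (hG : TriangleFreeOn X G) :
    TriangleFreeOn (X.erase x) (G.nonMemberSubfamily x) :=
  hG.mono (filter_subset _ _) fun A hA => by
    obtain ⟨hA, hxA⟩ := mem_nonMemberSubfamily.mp hA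
    exact mem_powerset.mpr (subset_erase.mpr ⟨mem_powerset.mp (hG.subset_powerset hA), hxA⟩)

lemma memberSubfamily_subset (hG : TriangleFreeOn X G) :
    G.memberSubfamily x ⊆ (X.erase x).powerset := fun W hW => by
  obtain ⟨hW, hxW⟩ := mem_memberSubfamily.mp hW
  exact mem_powerset.mpr (subset_erase.mpr
    ⟨(subset_insert x W).trans (mem_powerset.mp (hG.subset_powerset hW)), hxW⟩)

lemma empty_notMem_memberSubfamily (hG : TriangleFreeOn X G) : ∅ ∉ G.memberSubfamily x :=
  fun h => by simpa using hG.two_le_card _ (mem_memberSubfamily.mp h).1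

lemma meetsInter (hG : TriangleFreeOn X G) :
    MeetsInter (G.nonMemberSubfamily x) (G.memberSubfamily x) := by
  intro A hA B hB C hC hAB hAC
  obtain ⟨hA, hxA⟩ := mem_nonMemberSubfamily.mp hA
  obtain ⟨a, ha⟩ := hG.simplexFree.inter_nonempty hA (mem_memberSubfamily.mp hB).1
    (mem_memberSubfamily.mp hC).1 (hAB.mono (inter_subset_inter_left (subset_insert x B)))
    (hAC.mono (inter_subset_inter_left (subset_insert x C)))
    ⟨x, mem_inter.mpr ⟨mem_insert_self x B, mem_insert_self x C⟩⟩
  simp only [mem_inter, mem_insert] at ha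
  have hax : a ≠ x := fun h => hxA (h ▸ ha.1.1)
  exact ⟨a, by simp [ha.1.1, ha.1.2.resolve_left hax, ha.2.resolve_left hax]⟩

lemma two_mul_card_add_two_le_of_nonMemberSubfamily (hG : TriangleFreeOn X G) (hx : x ∈ X)
    (hC : 2 * #(G.nonMemberSubfamily x) + #(nonsplitting (X.erase x) (G.nonMemberSubfamily x)) ≤
      2 ^ #(X.erase x)) :
    2 * #G + 2 ≤ 2 ^ #X := by
  have hX := two_pow_card_eq_two_mul_two_pow_card_erase hx
  have hsplit := card_memberSubfamily_add_card_nonMemberSubfamily x G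
  rcases (X.erase x).eq_empty_or_nonempty with hY | hY
  · have hH : G.memberSubfamily x = ∅ := eq_empty_of_forall_notMem fun W hW => by
      obtain rfl : W = ∅ := by simpa [hY] using hG.memberSubfamily_subset hW
      exact hG.empty_notMem_memberSubfamily hW
    have := card_pos.mpr ⟨_, empty_mem_nonsplitting (Y := X.erase x) (G := G.nonMemberSubfamily x)⟩
    rw [hY, card_empty, pow_zero] at hX hC
    rw [hH, card_empty] at hsplit
    omega
  · have := two_mul_card_add_two_le_of_meetsInter hY hG.nonMemberSubfamily.subset_powerset
      hG.memberSubfamily_subset hG.empty_notMem_memberSubfamily hG.meetsInter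
    have := card_union_image_sdiff_le (hG.memberSubfamily_subset (x := x))
    omega

lemma eq_bigStar_of_forall_mem (hG : TriangleFreeOn X G) (hx : x ∈ X)
    (h : ∀ A ∈ G, x ∈ A) (heq : 2 * #G + 2 = 2 ^ #X) : G = bigStar X x :=
  eq_of_subset_of_card_le (fun A hA => mem_bigStar.mpr
      ⟨mem_powerset.mp (hG.subset_powerset hA), h A hA, hG.two_le_card A hA⟩)
    (by have := card_bigStar hx; omega)

lemma exists_atom_split (hG : TriangleFreeOn Y G) {A₀ : Finset α} (hA₀ : A₀ ∈ G) :
    ∃ V ⊆ Y, 2 ≤ #V ∧ TriangleFreeOn V (G.filter (· ⊆ V)) ∧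
      TriangleFreeOn (Y \ V) (G.filter fun A => ¬A ⊆ V) ∧
      #(nonsplitting Y G) = 2 * #(nonsplitting (Y \ V) (G.filter fun A => ¬A ⊆ V)) := by
  obtain ⟨V, hVS, hA₀V, hatom⟩ := exists_atom_nonsplitting hG.subset_powerset hA₀
  have hVY := (mem_nonsplitting.mp hVS).1
  have hV2 : 2 ≤ #V := (hG.two_le_card A₀ hA₀).trans (card_le_card hA₀V)
  refine ⟨V, hVY, hV2,
    hG.mono (filter_subset _ _) fun A hA => mem_powerset.mpr (mem_filter.mp hA).2,
    hG.mono (filter_subset _ _) fun A hA => ?_,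
    card_nonsplitting_eq_two_mul hG.subset_powerset hVY (card_pos.mp (by omega)) hatom⟩
  obtain ⟨hA, hAV⟩ := mem_filter.mp hA
  have hdisj := ((mem_nonsplitting.mp hVS).2 A hA).resolve_left hAV
  exact mem_powerset.mpr (subset_sdiff.mpr ⟨mem_powerset.mp (hG.subset_powerset hA), hdisj⟩)

theorem two_mul_card_add_card_nonsplitting_le (hG : TriangleFreeOn Y G) :
    2 * #G + #(nonsplitting Y G) ≤ 2 ^ #Y := by
  induction Y using Finset.strongInduction generalizing G with
  | H Y ih =>
  rcases G.eq_empty_or_nonempty with rfl | ⟨A₀, hA₀⟩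
  · simp [nonsplitting_empty]
  obtain ⟨V, hVY, hV2, hGV, hGr, hS⟩ := hG.exists_atom_split hA₀
  obtain ⟨x, hx⟩ : V.Nonempty := card_pos.mp (by omega)
  have hbV := hGV.two_mul_card_add_two_le_of_nonMemberSubfamily hx
    (ih _ ((erase_ssubset hx).trans_le hVY) hGV.nonMemberSubfamily)
  have hbR := ih _ (sdiff_ssubset hVY ⟨x, hx⟩) hGr
  have := (two_mul_add_two_mul_le_two_pow_add hV2 hbV hbR card_nonsplitting_le).1
  rwa [card_filter_add_card_filter_not, ← hS, add_comm #V, card_sdiff_add_card_eq_card hVY] at this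

lemma eq_bigStar_of_nonMemberSubfamily (hG : TriangleFreeOn X G) (hx : x ∈ X)
    (hC : 2 * #(G.nonMemberSubfamily x) + #(nonsplitting (X.erase x) (G.nonMemberSubfamily x)) =
        2 ^ #(X.erase x) →
      G.nonMemberSubfamily x = ∅ ∨ ∃ z ∈ X.erase x, G.nonMemberSubfamily x = bigStar (X.erase x) z)
    (heq : 2 * #G + 2 = 2 ^ #X) : ∃ u ∈ X, G = bigStar X u := by
  have hX := two_pow_card_eq_two_mul_two_pow_card_erase hx
  have hsplit := card_memberSubfamily_add_card_nonMemberSubfamily x G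
  have hbound := hG.nonMemberSubfamily (x := x).two_mul_card_add_card_nonsplitting_le
  rcases (G.nonMemberSubfamily x).eq_empty_or_nonempty with h0 | ⟨A₀, hA₀⟩
  · refine ⟨x, hx, hG.eq_bigStar_of_forall_mem hx (fun A hA => ?_) heq⟩
    by_contra hxA
    exact (eq_empty_iff_forall_notMem.mp h0) A (mem_nonMemberSubfamily.mpr ⟨hA, hxA⟩)
  have hY2 : 2 ≤ #(X.erase x) := (hG.nonMemberSubfamily.two_le_card A₀ hA₀).trans
    (card_le_card (mem_powerset.mp (hG.nonMemberSubfamily.subset_powerset hA₀)))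
  have hlink := two_mul_card_add_two_le_of_meetsInter (card_pos.mp (by omega : 0 < #(X.erase x)))
    hG.nonMemberSubfamily.subset_powerset hG.memberSubfamily_subset
    hG.empty_notMem_memberSubfamily hG.meetsInter
  have hU := card_union_image_sdiff_le (hG.memberSubfamily_subset (x := x))
  obtain ⟨z, hz, hGz⟩ := (hC (by omega)).resolve_left (nonempty_iff_ne_empty.mp ⟨A₀, hA₀⟩)
  obtain ⟨u, huY, hH, hG0⟩ := exists_forall_mem_of_meetsInter_bigStar hz hY2
    hG.memberSubfamily_subset hG.empty_notMem_memberSubfamily (hGz ▸ hG.meetsInter)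
    (forall_mem_or_sdiff_mem hG.memberSubfamily_subset (by omega))
  refine ⟨u, mem_of_mem_erase huY, hG.eq_bigStar_of_forall_mem (mem_of_mem_erase huY)
    (fun A hA => ?_) heq⟩
  by_cases hxA : x ∈ A
  · exact mem_of_mem_erase (hH _ (mem_memberSubfamily.mpr ⟨by rwa [insert_erase hxA],
      notMem_erase x A⟩))
  · exact hG0 A (hGz ▸ mem_nonMemberSubfamily.mpr ⟨hA, hxA⟩)

theorem eq_bigStar_of_two_mul_card_add_card_nonsplitting_eq (hG : TriangleFreeOn Y G)
    (heq : 2 * #G + #(nonsplitting Y G) = 2 ^ #Y) : G = ∅ ∨ ∃ z ∈ Y, G = bigStar Y z := by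
  induction Y using Finset.strongInduction generalizing G with
  | H Y ih =>
  rcases G.eq_empty_or_nonempty with rfl | ⟨A₀, hA₀⟩
  · exact Or.inl rfl
  obtain ⟨V, hVY, hV2, hGV, hGr, hS⟩ := hG.exists_atom_split hA₀
  obtain ⟨x, hx⟩ : V.Nonempty := card_pos.mp (by omega)
  have hbV := hGV.two_mul_card_add_two_le_of_nonMemberSubfamily hx
    hGV.nonMemberSubfamily.two_mul_card_add_card_nonsplitting_le
  obtain ⟨hr, hV⟩ := (two_mul_add_two_mul_le_two_pow_add hV2 hbV
    hGr.two_mul_card_add_card_nonsplitting_le card_nonsplitting_le).2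
    (by rwa [card_filter_add_card_filter_not, ← hS, add_comm #V, card_sdiff_add_card_eq_card hVY])
  obtain rfl : V = Y := eq_of_subset_of_card_le hVY
    (by have := card_sdiff_add_card_eq_card hVY; omega)
  rw [filter_true_of_mem fun A hA => mem_powerset.mp (hG.subset_powerset hA)] at hV
  exact Or.inr (hG.eq_bigStar_of_nonMemberSubfamily hx
    (ih _ (erase_ssubset hx) hG.nonMemberSubfamily) hV)

theorem two_mul_card_add_two_le (hG : TriangleFreeOn X G) (hX : X.Nonempty) :
    2 * #G + 2 ≤ 2 ^ #X :=
  let ⟨_, hx⟩ := hX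
  hG.two_mul_card_add_two_le_of_nonMemberSubfamily hx
    hG.nonMemberSubfamily.two_mul_card_add_card_nonsplitting_le

theorem eq_bigStar (hG : TriangleFreeOn X G) (hX : X.Nonempty) (heq : 2 * #G + 2 = 2 ^ #X) :
    ∃ u ∈ X, G = bigStar X u :=
  let ⟨_, hx⟩ := hX
  hG.eq_bigStar_of_nonMemberSubfamily hx
    hG.nonMemberSubfamily.eq_bigStar_of_two_mul_card_add_card_nonsplitting_eq heq

end TriangleFreeOn

lemma card_filter_card_le_one (X : Finset α) : #(X.powerset.filter fun A => #A ≤ 1) = #X + 1 := by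
  have : X.powerset.filter (fun A => #A ≤ 1) = X.powersetCard 0 ∪ X.powersetCard 1 := by
    ext A
    simp only [mem_filter, mem_powerset, mem_union, mem_powersetCard]
    grind
  rw [this, card_union_of_disjoint, card_powersetCard, card_powersetCard, Nat.choose_zero_right,
    Nat.choose_one_right, add_comm]
  exact disjoint_left.mpr fun A h₀ h₁ => by
    rw [mem_powersetCard] at h₀ h₁
    omega

lemma disjoint_bigStar_filter_card_le_one (X : Finset α) (u : α) :
    Disjoint (bigStar X u) (X.powerset.filter fun A => #A ≤ 1) :=
  disjoint_left.mpr fun A hA h => by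
    have := (mem_bigStar.mp hA).2.2
    have := (mem_filter.mp h).2
    omega

lemma bigStar_union_filter_card_le_one (X : Finset α) (u : α) :
    bigStar X u ∪ X.powerset.filter (fun A => #A ≤ 1) =
      X.powerset.filter (fun A => u ∈ A) ∪ X.powerset.filter (fun A => #A ≤ 1 ∧ u ∉ A) := by
  ext A
  simp only [mem_union, mem_bigStar, mem_filter, mem_powerset]
  grind

end

theorem stmt5 {α : Type*} [DecidableEq α] (n : ℕ) (hn : 1 ≤ n) (X : Finset α)
    (hX : X.card = n) (F : Finset (Finset α)) (hF : F ⊆ X.powerset)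
    (hfree : SimplexFree 2 F) :
    F.card ≤ 2 ^ (n - 1) + n ∧
    (F.card = 2 ^ (n - 1) + n ↔ ∃ x ∈ X,
      F = X.powerset.filter (fun A => x ∈ A) ∪
        X.powerset.filter (fun A => A.card ≤ 1 ∧ x ∉ A)) := by
  subst hX
  have hXne : X.Nonempty := card_pos.mp hn
  have hpow : 2 ^ #X = 2 * 2 ^ (#X - 1) := by rw [← pow_succ', Nat.sub_add_cancel hn]
  have hlarge : TriangleFreeOn X (F.filter fun A => ¬#A ≤ 1) :=
    ⟨(filter_subset _ _).trans hF, fun A hA => by have := (mem_filter.mp hA).2; omega,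
      hfree.mono (filter_subset _ _)⟩
  have hsmall : F.filter (fun A => #A ≤ 1) ⊆ X.powerset.filter fun A => #A ≤ 1 :=
    filter_subset_filter _ hF
  have hsplit := card_filter_add_card_filter_not (s := F) fun A => #A ≤ 1
  have hb := hlarge.two_mul_card_add_two_le hXne
  have hs := card_filter_card_le_one X ▸ card_le_card hsmall
  refine ⟨by omega, fun heq => ?_, ?_⟩
  · obtain ⟨u, hu, hstar⟩ := hlarge.eq_bigStar hXne (by omega)
    have hsmall_eq := eq_of_subset_of_card_le hsmall (by rw [card_filter_card_le_one]; omega)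
    refine ⟨u, hu, ?_⟩
    rw [← bigStar_union_filter_card_le_one, ← hstar, ← hsmall_eq, union_comm,
      filter_union_filter_not_eq]
  · rintro ⟨u, hu, rfl⟩
    rw [← bigStar_union_filter_card_le_one, card_union_of_disjoint
      (disjoint_bigStar_filter_card_le_one X u), card_filter_card_le_one]
    have := card_bigStar hu
    omega
end
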